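/- arXiv:2011.06247 — 2 statements merged into one kernel-verified Lean document; each statement's English description precedes it below -/
import Mathlib

section
/- Zero-collateral condition: let K be the set of players with investment opportunities in enterprise k, fix A_k ⊂ K and a player i ∈ K∖A_k. (1) If x_{ki} + Σ_{j∈A_k} x_{kj} ≥ Z_k(1 + 1/α_k), then for every action profile of all players in which i does not default and all players of A_k invest in k, player i has a strict best reply to cooperate with respect to k even with zero collateral c_{ki}=0. (2) Conversely, if with c_{ki}=0 player i's utility from enterprise k is at least x_{ki} under the profile where exactly the players A_k ∪ {i} invest in k and all other players in K defect, then x_{ki} + Σ_{j∈A_k} x_{kj} ≥ Z_k(1 + 1/α_k). -/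
open scoped BigOperators Classical

/-- A network investment game on `n` firms.  `x k i` is the amount that firm `i`
can invest in the enterprise of firm `k` (`x k i = 0` means that there is no
edge `(k,i)`), `Z k` is the operational cost of the enterprise of `k` and
`α k` is its interest rate.  As in the paper, `Z k = 0` (w.l.o.g.) for
non-enterprise vertices and `α k > 0` for enterprise vertices. -/
structure InvestmentNetwork (n : ℕ) where
  x : Fin n → Fin n → ℝ
  Z : Fin n → ℝ
  α : Fin n → ℝ
  x_nonneg : ∀ k i, 0 ≤ x k i
  Z_nonneg : ∀ k, 0 ≤ Z k
  α_pos : ∀ k, (∃ i, 0 < x k i) → 0 < α k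
  Z_spike : ∀ k, (∀ i, x k i = 0) → Z k = 0

namespace InvestmentNetwork

variable {n : ℕ}

/-- `k` is an enterprise vertex: it has at least one potential investor. -/
def IsEnterprise (N : InvestmentNetwork n) (k : Fin n) : Prop :=
  ∃ i, 0 < N.x k i

/-- The set of edges `(k,i)` of the investment graph: `i` has an investment
opportunity in the enterprise of `k`. -/
noncomputable def edges (N : InvestmentNetwork n) : Finset (Fin n × Fin n) :=
  Finset.univ.filter (fun e => 0 < N.x e.1 e.2)

/-- A strategy profile is identified with its set of cooperate edges. -/
def IsProfile (N : InvestmentNetwork n) (C : Finset (Fin n × Fin n)) : Prop :=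
  C ⊆ N.edges

/-- The total capital raised by enterprise `k` when `I` is a set of invest edges. -/
noncomputable def raised (N : InvestmentNetwork n) (I : Finset (Fin n × Fin n)) (k : Fin n) : ℝ :=
  ∑ i : Fin n, if (k, i) ∈ I then N.x k i else 0

/-- `I` is a consistent set of invest edges within the cooperate edges `C`: the
investor of every edge of `I` is not in default when the invest edges are `I`. -/
def Consistent (N : InvestmentNetwork n) (C I : Finset (Fin n × Fin n)) : Prop :=
  I ⊆ C ∧ ∀ e ∈ I, N.Z e.2 ≤ N.raised I e.2

/-- The set of invest edges determined from the cooperate edges `C` by the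
default-determination process (the greatest consistent subset of `C`,
i.e. the result of iteratively deleting the investments of defaulting firms). -/
noncomputable def investSet (N : InvestmentNetwork n) (C : Finset (Fin n × Fin n)) :
    Finset (Fin n × Fin n) :=
  C.filter (fun e => ∃ I, N.Consistent C I ∧ e ∈ I)

/-- Firm `k` is in default under the cooperate edges `C`. -/
def Defaults (N : InvestmentNetwork n) (C : Finset (Fin n × Fin n)) (k : Fin n) : Prop :=
  N.raised (N.investSet C) k < N.Z k

/-- The enterprise return `R_{ki}` to investor `i` in enterprise `k` when the
set of invest edges is `I`. -/
noncomputable def ret (N : InvestmentNetwork n) (I : Finset (Fin n × Fin n)) (k i : Fin n) : ℝ :=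
  max 0 ((1 + N.α k) * (N.raised I k - N.Z k) * (N.x k i / N.raised I k))

/-- The utility of firm `i` from the edge `(k,i)` under cooperate edges `C` and
collateral matrix `c`: `x k i` if `i` defects, `0` if `i` cooperates but is in
default, and otherwise the return adjusted by the collateral. -/
noncomputable def edgeUtility (N : InvestmentNetwork n) (c : Fin n → Fin n → ℝ)
    (C : Finset (Fin n × Fin n)) (k i : Fin n) : ℝ :=
  if (k, i) ∉ C then N.x k i
  else if (k, i) ∉ N.investSet C then 0
  else if N.ret (N.investSet C) k i ≤ N.x k i - c k i then c k i + N.ret (N.investSet C) k i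
  else if N.ret (N.investSet C) k i ≤ N.x k i then N.x k i
  else N.ret (N.investSet C) k i

/-- Total utility of firm `i`: the sum of her utilities over all her
investment opportunities. -/
noncomputable def utility (N : InvestmentNetwork n) (c : Fin n → Fin n → ℝ)
    (C : Finset (Fin n × Fin n)) (i : Fin n) : ℝ :=
  ∑ k : Fin n, if (k, i) ∈ N.edges then N.edgeUtility c C k i else 0

/-- The number of investment opportunities in which `i` cooperates. -/
noncomputable def coopCount (C : Finset (Fin n × Fin n)) (i : Fin n) : ℕ :=
  (C.filter (fun e => e.2 = i)).card

/-- `c` is a collateral matrix: nonnegative and supported on the edges. -/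
def IsCollateral (N : InvestmentNetwork n) (c : Fin n → Fin n → ℝ) : Prop :=
  ∀ k i, 0 ≤ c k i ∧ (N.x k i = 0 → c k i = 0)

/-- `C'` is obtained from `C` by changing only decisions of player `i`. -/
def Deviation (C C' : Finset (Fin n × Fin n)) (i : Fin n) : Prop :=
  ∀ e : Fin n × Fin n, e.2 ≠ i → (e ∈ C ↔ e ∈ C')

/-- Nash equilibrium of the game induced by the collateral matrix `c`, with
ties broken towards investing: this is formalized by comparing utilities
lexicographically, an infinitesimal bonus being given for each cooperation. -/
def NashEq (N : InvestmentNetwork n) (c : Fin n → Fin n → ℝ)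
    (C : Finset (Fin n × Fin n)) : Prop :=
  N.IsProfile C ∧
    ∀ (i : Fin n) (C' : Finset (Fin n × Fin n)), N.IsProfile C' → Deviation C C' i →
      N.utility c C' i < N.utility c C i ∨
        (N.utility c C' i = N.utility c C i ∧ coopCount C' i ≤ coopCount C i)

/-- A viable collateral matrix: all-cooperate is the unique Nash equilibrium of
the induced game. -/
def Viable (N : InvestmentNetwork n) (c : Fin n → Fin n → ℝ) : Prop :=
  N.IsCollateral c ∧ N.NashEq c N.edges ∧ ∀ C, N.NashEq c C → C = N.edges

/-- The total collateral of a collateral matrix. -/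
noncomputable def total (c : Fin n → Fin n → ℝ) : ℝ :=
  ∑ k : Fin n, ∑ i : Fin n, c k i

/-- An optimal solution of the collateral minimization problem: a viable
collateral matrix of minimum total collateral. -/
def Optimal (N : InvestmentNetwork n) (c : Fin n → Fin n → ℝ) : Prop :=
  N.Viable c ∧ ∀ c', N.Viable c' → total c ≤ total c'

/-- All enterprises are (potentially) profitable:
`(1 + α k) * (X k - Z k) ≥ X k` where `X k = ∑ i, x k i`. -/
def Profitable (N : InvestmentNetwork n) : Prop :=
  ∀ k, N.IsEnterprise k → (∑ i, N.x k i) ≤ (1 + N.α k) * ((∑ i, N.x k i) - N.Z k)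

/-- Player `i` strictly prefers (ties being broken towards investing) to
cooperate rather than to defect w.r.t. enterprise `k`, when the cooperate
edges of the other decisions are those of `C`. -/
def StrictlyPrefersCoop (N : InvestmentNetwork n) (c : Fin n → Fin n → ℝ)
    (C : Finset (Fin n × Fin n)) (k i : Fin n) : Prop :=
  N.x k i ≤ N.edgeUtility c (insert (k, i) C) k i

/-- `σ` is an order of the edges along which iterated elimination of strictly
dominated strategies leads to the all-cooperate profile: at every step, given
that the previously processed edges cooperate, the player of the next edge
strictly prefers to cooperate whatever the remaining players do. -/
def ElimOrder (N : InvestmentNetwork n) (c : Fin n → Fin n → ℝ)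
    (σ : List (Fin n × Fin n)) : Prop :=
  σ.Nodup ∧ (∀ e, e ∈ σ ↔ e ∈ N.edges) ∧
    ∀ (t : ℕ) (ht : t < σ.length) (C : Finset (Fin n × Fin n)),
      N.IsProfile C → (∀ e ∈ σ.take t, e ∈ C) →
      N.StrictlyPrefersCoop c C (σ.get ⟨t, ht⟩).1 (σ.get ⟨t, ht⟩).2

end InvestmentNetwork

namespace InvestmentNetwork

/-- The enterprise return to investor `i` in enterprise `k` when the set of
players investing in `k` is exactly `S`. -/
noncomputable def retOf (N : InvestmentNetwork n) (S : Finset (Fin n)) (k i : Fin n) : ℝ :=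
  max 0 ((1 + N.α k) * ((∑ j ∈ S, N.x k j) - N.Z k) * (N.x k i / ∑ j ∈ S, N.x k j))

end InvestmentNetwork

/-
With zero collateral an investor's utility is just her share `(1 + α) (X - Z) x / X` of the
return, where `X` is the capital raised by the enterprise. This share is at least her stake `x`
iff `X ≤ (1 + α) (X - Z)`, i.e. iff `Z (1 + 1/α) ≤ X`. In (1) the raised capital is at least
`x k i + ∑_{j ∈ A} x k j`, since `i` and all of `A` invest; in (2) it is exactly that sum.
-/

lemma le_max_zero_return_iff {α Z X x : ℝ} (hα : 0 < α) (hx : 0 < x) (hX : 0 < X) :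
    x ≤ max 0 ((1 + α) * (X - Z) * (x / X)) ↔ Z * (1 + 1 / α) ≤ X := by
  have hshare : x ≤ (1 + α) * (X - Z) * (x / X) ↔ X ≤ (1 + α) * (X - Z) := by
    rw [mul_div_assoc', le_div_iff₀ hX, mul_comm x, mul_le_mul_iff_of_pos_right hx]
  have hthreshold : X ≤ (1 + α) * (X - Z) ↔ Z * (1 + 1 / α) ≤ X := by
    have hZ : Z * (1 + 1 / α) = Z * (1 + α) / α := by field_simp; ring
    rw [hZ, div_le_iff₀ hα]
    constructor <;> intro h <;> linarith
  rw [le_max_iff, or_iff_right hx.not_ge, hshare, hthreshold]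

namespace InvestmentNetwork

variable {n : ℕ} (N : InvestmentNetwork n)

lemma raised_mono {I I' : Finset (Fin n × Fin n)} (h : I ⊆ I') (k : Fin n) :
    N.raised I k ≤ N.raised I' k :=
  Finset.sum_le_sum fun j _ => by
    by_cases hj : (k, j) ∈ I
    · simp [hj, h hj]
    · rw [if_neg hj]
      split_ifs <;> simp [N.x_nonneg]

lemma sum_le_raised {I : Finset (Fin n × Fin n)} {k : Fin n} {S : Finset (Fin n)}
    (hS : ∀ j ∈ S, (k, j) ∈ I) : ∑ j ∈ S, N.x k j ≤ N.raised I k :=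
  calc ∑ j ∈ S, N.x k j = ∑ j ∈ S, if (k, j) ∈ I then N.x k j else 0 :=
        Finset.sum_congr rfl fun j hj => (if_pos (hS j hj)).symm
    _ ≤ N.raised I k :=
        Finset.sum_le_sum_of_subset_of_nonneg (Finset.subset_univ S) fun j _ _ => by
          split_ifs <;> simp [N.x_nonneg]

lemma consistent_investSet (C : Finset (Fin n × Fin n)) : N.Consistent C (N.investSet C) := by
  refine ⟨Finset.filter_subset _ _, fun e he => ?_⟩
  obtain ⟨-, I, hI, heI⟩ := Finset.mem_filter.mp he
  have hsub : I ⊆ N.investSet C := fun f hf => Finset.mem_filter.mpr ⟨hI.1 hf, I, hI, hf⟩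
  exact (hI.2 e heI).trans (N.raised_mono hsub e.2)

/-- Adding to `investSet C` an edge of `C` whose investor is not in default keeps it
consistent, so the edge was already there. -/
lemma mem_investSet_of_not_defaults {C : Finset (Fin n × Fin n)} {k i : Fin n}
    (hC : (k, i) ∈ C) (hi : ¬ N.Defaults C i) : (k, i) ∈ N.investSet C := by
  have hcons := N.consistent_investSet C
  have hsub : N.investSet C ⊆ insert (k, i) (N.investSet C) := Finset.subset_insert _ _
  refine Finset.mem_filter.mpr
    ⟨hC, insert (k, i) (N.investSet C), ⟨?_, fun e he => ?_⟩, Finset.mem_insert_self _ _⟩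
  · exact Finset.insert_subset hC hcons.1
  · rcases Finset.mem_insert.mp he with rfl | he
    · exact (not_lt.mp hi).trans (N.raised_mono hsub _)
    · exact (hcons.2 e he).trans (N.raised_mono hsub e.2)

lemma edgeUtility_eq_ret {c : Fin n → Fin n → ℝ} {C : Finset (Fin n × Fin n)} {k i : Fin n}
    (hki : (k, i) ∈ N.investSet C) (hci : c k i = 0) :
    N.edgeUtility c C k i = N.ret (N.investSet C) k i := by
  have hkiC : (k, i) ∈ C := (N.consistent_investSet C).1 hki
  simp only [edgeUtility, hkiC, hki, hci, not_true_eq_false, if_false, sub_zero, zero_add]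
  split_ifs <;> linarith

end InvestmentNetwork

theorem zero_collateral_condition_general {n : ℕ} (N : InvestmentNetwork n)
    (k i : Fin n) (A : Finset (Fin n))
    (hiK : 0 < N.x k i) (hiA : i ∉ A)
    (c : Fin n → Fin n → ℝ) (hci : c k i = 0) :
    ((N.Z k * (1 + 1 / N.α k) ≤ N.x k i + ∑ j ∈ A, N.x k j →
       ∀ C : Finset (Fin n × Fin n), N.IsProfile C → (k, i) ∈ C →
         ¬ N.Defaults C i → (∀ j ∈ A, (k, j) ∈ N.investSet C) →
         N.x k i ≤ N.edgeUtility c C k i)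
     ∧
     (N.x k i ≤ N.retOf (insert i A) k i →
       N.Z k * (1 + 1 / N.α k) ≤ N.x k i + ∑ j ∈ A, N.x k j)) := by
  have hα : 0 < N.α k := N.α_pos k ⟨i, hiK⟩
  have hsum : ∑ j ∈ insert i A, N.x k j = N.x k i + ∑ j ∈ A, N.x k j := Finset.sum_insert hiA
  have hpos : 0 < ∑ j ∈ insert i A, N.x k j :=
    hsum ▸ add_pos_of_pos_of_nonneg hiK (Finset.sum_nonneg fun j _ => N.x_nonneg k j)
  refine ⟨fun hZ C _ hiC hnd hA => ?_, fun h => ?_⟩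
  · have hki := N.mem_investSet_of_not_defaults hiC hnd
    have hraised : ∑ j ∈ insert i A, N.x k j ≤ N.raised (N.investSet C) k :=
      N.sum_le_raised (Finset.forall_mem_insert _ _ _ |>.mpr ⟨hki, hA⟩)
    rw [N.edgeUtility_eq_ret hki hci, InvestmentNetwork.ret,
      le_max_zero_return_iff hα hiK (hpos.trans_le hraised)]
    linarith
  · rwa [InvestmentNetwork.retOf, le_max_zero_return_iff hα hiK hpos, hsum] at h

/-- **Zero-collateral condition (Lemma 1).**  Let `A` be a set of investors of
enterprise `k` and `i ∉ A` another investor of `k`, and suppose `i`'s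
collateral is `c k i = 0`.
(1) If `x k i + ∑_{j ∈ A} x k j ≥ Z k (1 + 1/α k)`, then in every action
profile in which `i` cooperates w.r.t. `k` and does not default and all
players of `A` invest in `k`, cooperation w.r.t. `k` is a strict best reply of
`i` (ties broken towards investing) even with zero collateral, i.e. her
utility from the edge `(k,i)` is at least the defect utility `x k i`.
(2) Conversely, if the utility of `i` (with zero collateral) from `k` is at
least `x k i` when exactly the players `A ∪ {i}` invest in `k`, then
`x k i + ∑_{j ∈ A} x k j ≥ Z k (1 + 1/α k)`. -/
theorem zero_collateral_condition {n : ℕ} (N : InvestmentNetwork n)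
    (k i : Fin n) (A : Finset (Fin n))
    (hAK : ∀ j ∈ A, 0 < N.x k j) (hiK : 0 < N.x k i) (hiA : i ∉ A)
    (c : Fin n → Fin n → ℝ) (hc : N.IsCollateral c) (hci : c k i = 0) :
    ((N.Z k * (1 + 1 / N.α k) ≤ N.x k i + ∑ j ∈ A, N.x k j →
       ∀ C : Finset (Fin n × Fin n), N.IsProfile C → (k, i) ∈ C →
         ¬ N.Defaults C i → (∀ j ∈ A, (k, j) ∈ N.investSet C) →
         N.x k i ≤ N.edgeUtility c C k i)
     ∧
     (N.x k i ≤ N.retOf (insert i A) k i →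
       N.Z k * (1 + 1 / N.α k) ≤ N.x k i + ∑ j ∈ A, N.x k j)) :=
  zero_collateral_condition_general N k i A hiK hiA c hci
end

section
/- Correctness of the subset-selection procedure: in the single-enterprise model, for every subset S of the players define the collateral vector c(S) by giving each player in S a full collateral and each player i ∈ S^c the collateral max(0, x_i[1 − (1+α)(1 − Z/(Σ_{j∈S} x_j + Σ_{j∈S^c, x_j ≥ x_i (with ties by index)} x_j))]), i.e., processing S^c in non-increasing order of investment amounts. Then each c(S) is a viable collateral vector, and the minimum over all subsets S of the total collateral of c(S) equals the optimal value of the single-enterprise collateral minimization problem. -/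
/-!
`c(S)` is viable: a fully secured player never defects, and a player of `Sᶜ` whose predecessors
in the processing order cooperate, together with all of `S`, earns at least the part of its
investment that `c(S)` leaves unsecured. Hence in any other profile the first defector would
rather cooperate.

Conversely, let `c` be viable. From every cooperator set other than all players some player
weakly prefers to join, so the players can be listed in an order in which each joins in turn.
A player whose joining brings the cooperating total to `s` must secure at least the fraction
`min 1 (max 0 (rate s))` of its investment, where `rate s = 1 - (1 + α)(1 - Z / s)` decreases
in `s`. Let `S` be the players that join while this fraction is `1`. After them the clamp at `1`
is inactive, and an exchange argument shows that the cost `∑ x_j · max 0 (rate s_j)` is least when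
the remaining players join in non-increasing order of investment, which is exactly `c(S)`.
-/

open scoped BigOperators Classical

/-- The single-enterprise (star) model: one enterprise with operational cost
`Z ≥ 0` and interest rate `α > 0`, and `n` potential investors, where investor
`i` may invest the amount `x i > 0`.  The enterprise is profitable:
`(1 + α) * (∑ x - Z) ≥ ∑ x`. -/
structure StarGame (n : ℕ) where
  x : Fin n → ℝ
  Z : ℝ
  α : ℝ
  x_pos : ∀ i, 0 < x i
  Z_nonneg : 0 ≤ Z
  α_pos : 0 < α
  profitable : (∑ i, x i) ≤ (1 + α) * ((∑ i, x i) - Z)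

namespace StarGame

variable {n : ℕ}

/-- The enterprise return to a cooperating investor `i` when `S` is the set of
cooperators: `R_i = max (0, (1+α)(∑_{j∈S} x_j − Z) · x_i / ∑_{j∈S} x_j)`
(in particular it is `0` if the enterprise defaults,
i.e. if `∑_{j∈S} x_j < Z`). -/
noncomputable def ret (G : StarGame n) (S : Finset (Fin n)) (i : Fin n) : ℝ :=
  max 0 ((1 + G.α) * ((∑ j ∈ S, G.x j) - G.Z) * (G.x i / ∑ j ∈ S, G.x j))

/-- The utility of a cooperating investor `i` with collateral `c i` when the
set of cooperators is `S` (the collateral is realized when the return falls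
below the invested amount). -/
noncomputable def coopUtil (G : StarGame n) (c : Fin n → ℝ) (S : Finset (Fin n))
    (i : Fin n) : ℝ :=
  if G.ret S i ≤ G.x i - c i then c i + G.ret S i
  else if G.ret S i ≤ G.x i then G.x i
  else G.ret S i

/-- The utility of investor `i` under the profile with cooperator set `S`. -/
noncomputable def utility (G : StarGame n) (c : Fin n → ℝ) (S : Finset (Fin n))
    (i : Fin n) : ℝ :=
  if i ∈ S then G.coopUtil c S i else G.x i

/-- `S` is a Nash equilibrium of the game induced by the collateral vector `c`,
with ties broken towards cooperating: every cooperator weakly prefers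
cooperating, and every defector strictly prefers defecting. -/
def NashEq (G : StarGame n) (c : Fin n → ℝ) (S : Finset (Fin n)) : Prop :=
  (∀ i ∈ S, G.x i ≤ G.coopUtil c S i) ∧
    ∀ i ∉ S, G.coopUtil c (insert i S) i < G.x i

/-- A viable collateral vector: nonnegative collaterals for which all-cooperate
is the unique Nash equilibrium of the induced game. -/
def Viable (G : StarGame n) (c : Fin n → ℝ) : Prop :=
  (∀ i, 0 ≤ c i) ∧ G.NashEq c Finset.univ ∧ ∀ S, G.NashEq c S → S = Finset.univ

/-- The total collateral of a collateral vector. -/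
noncomputable def total (c : Fin n → ℝ) : ℝ := ∑ i, c i

/-- An optimal solution of the single-enterprise collateral minimization
problem: a viable collateral vector of minimum total collateral. -/
def Optimal (G : StarGame n) (c : Fin n → ℝ) : Prop :=
  G.Viable c ∧ ∀ c', G.Viable c' → total c ≤ total c'

/-- A minimal collateral vector: viable, and decreasing any single entry by any
`ε > 0` destroys viability. -/
def Minimal (G : StarGame n) (c : Fin n → ℝ) : Prop :=
  G.Viable c ∧ ∀ (i : Fin n) (ε : ℝ), 0 < ε → ¬ G.Viable (Function.update c i (c i - ε))

/-- The permutation `σ` (listing the players in the order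
`σ 1, σ 2, …, σ n`) is an order of iterated elimination of strictly dominated
strategies for the collateral vector `c`, leading to all-cooperate: at every
position `t`, given that the players at earlier positions cooperate, player
`σ t` strictly prefers to cooperate (ties broken towards cooperating) whatever
the remaining players do. -/
def ElimOrder (G : StarGame n) (c : Fin n → ℝ) (σ : Equiv.Perm (Fin n)) : Prop :=
  ∀ (t : Fin n) (S : Finset (Fin n)), (∀ s, s < t → σ s ∈ S) →
    G.x (σ t) ≤ G.coopUtil c (insert (σ t) S) (σ t)

end StarGame

namespace StarGame

/-- The collateral vector `c(S)` of the subset-selection procedure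
(Corollary 2): every player of `S` receives a full collateral, and the players
of `Sᶜ`, processed in non-increasing order of investment amounts (ties broken
by index), receive the partial collaterals of Theorem 6. -/
noncomputable def subsetCollateral (G : StarGame n) (S : Finset (Fin n)) :
    Fin n → ℝ :=
  fun i =>
    if i ∈ S then G.x i
    else
      max 0 (G.x i * (1 - (1 + G.α) *
        (1 - G.Z / ((∑ j ∈ S, G.x j) +
          ∑ j ∈ Sᶜ.filter (fun j => G.x i < G.x j ∨ (G.x j = G.x i ∧ j ≤ i)), G.x j))))

end StarGame

def cumCost (f : ℝ → ℝ) : ℝ → List ℝ → ℝ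
  | _, [] => 0
  | b, a :: l => a * f (b + a) + cumCost f (b + a) l

@[simp] lemma cumCost_nil (f : ℝ → ℝ) (b : ℝ) : cumCost f b [] = 0 := rfl

@[simp] lemma cumCost_cons (f : ℝ → ℝ) (b a : ℝ) (l : List ℝ) :
    cumCost f b (a :: l) = a * f (b + a) + cumCost f (b + a) l := rfl

lemma cumCost_append (f : ℝ → ℝ) (l₁ l₂ : List ℝ) (b : ℝ) :
    cumCost f b (l₁ ++ l₂) = cumCost f b l₁ + cumCost f (b + l₁.sum) l₂ := by
  induction l₁ generalizing b with
  | nil => simp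
  | cons a l ih => simp [ih, add_assoc]

lemma cumCost_congr {f g : ℝ → ℝ} {b : ℝ} {l : List ℝ} (hl : ∀ a ∈ l, 0 ≤ a)
    (hfg : ∀ s, b ≤ s → f s = g s) : cumCost f b l = cumCost g b l := by
  induction l generalizing b with
  | nil => rfl
  | cons a l ih =>
    have ha : 0 ≤ a := hl a List.mem_cons_self
    rw [cumCost_cons, cumCost_cons, hfg _ (by linarith),
      ih (fun y hy => hl y (List.mem_cons_of_mem _ hy)) fun s hs => hfg s (by linarith)]

def LargerFirst (f : ℝ → ℝ) : Prop :=
  ∀ b a h : ℝ, 0 ≤ b → 0 < a → a ≤ h → cumCost f b [h, a] ≤ cumCost f b [a, h]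

section LargerFirst

variable {f : ℝ → ℝ}

lemma LargerFirst.cumCost_swap_le (hf : LargerFirst f) {b a h : ℝ} (hb : 0 ≤ b) (ha : 0 < a)
    (hah : a ≤ h) (l : List ℝ) : cumCost f b (h :: a :: l) ≤ cumCost f b (a :: h :: l) := by
  have := hf b a h hb ha hah
  change cumCost f b ([h, a] ++ l) ≤ cumCost f b ([a, h] ++ l)
  rw [cumCost_append, cumCost_append]
  simp only [List.sum_cons, List.sum_nil, add_zero, add_comm h a]
  linarith

lemma LargerFirst.cumCost_orderedInsert_le (hf : LargerFirst f) {a : ℝ} (ha : 0 < a) :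
    ∀ {l : List ℝ} {b : ℝ}, (∀ y ∈ l, 0 < y) → 0 ≤ b →
      cumCost f b (l.orderedInsert (· ≥ ·) a) ≤ cumCost f b (a :: l)
  | [], _, _, _ => le_rfl
  | h :: l, b, hl, hb => by
    rw [List.orderedInsert_cons]
    split_ifs with hah
    · exact le_rfl
    · have hh : 0 < h := hl h List.mem_cons_self
      have ih := hf.cumCost_orderedInsert_le ha (l := l) (b := b + h)
        (fun y hy => hl y (List.mem_cons_of_mem _ hy)) (by linarith)
      calc cumCost f b (h :: l.orderedInsert (· ≥ ·) a)
          ≤ cumCost f b (h :: a :: l) := (add_le_add_iff_left _).2 ih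
        _ ≤ cumCost f b (a :: h :: l) := hf.cumCost_swap_le hb ha (le_of_not_ge hah) l

lemma LargerFirst.cumCost_insertionSort_le (hf : LargerFirst f) :
    ∀ {l : List ℝ} {b : ℝ}, (∀ y ∈ l, 0 < y) → 0 ≤ b →
      cumCost f b (l.insertionSort (· ≥ ·)) ≤ cumCost f b l
  | [], _, _, _ => le_rfl
  | a :: l, b, hl, hb => by
    have ha : 0 < a := hl a List.mem_cons_self
    have hl' : ∀ y ∈ l, 0 < y := fun y hy => hl y (List.mem_cons_of_mem _ hy)
    have ih := hf.cumCost_insertionSort_le hl' (b := b + a) (by linarith)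
    calc cumCost f b ((l.insertionSort (· ≥ ·)).orderedInsert (· ≥ ·) a)
        ≤ cumCost f b (a :: l.insertionSort (· ≥ ·)) :=
          hf.cumCost_orderedInsert_le ha
            (fun y hy => hl' y ((List.perm_insertionSort _ l).mem_iff.mp hy)) hb
      _ ≤ cumCost f b (a :: l) := (add_le_add_iff_left _).2 ih

lemma LargerFirst.cumCost_le_of_perm (hf : LargerFirst f) {l₁ l₂ : List ℝ} (hp : l₁.Perm l₂)
    (hs : l₁.Pairwise (· ≥ ·)) (hpos : ∀ y ∈ l₂, 0 < y) {b : ℝ} (hb : 0 ≤ b) :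
    cumCost f b l₁ ≤ cumCost f b l₂ := by
  have : l₁ = l₂.insertionSort (· ≥ ·) :=
    hp.trans (List.perm_insertionSort _ l₂).symm |>.eq_of_pairwise
      (fun _ _ _ _ h₁ h₂ => le_antisymm h₂ h₁) hs (List.pairwise_insertionSort _ l₂)
  exact this ▸ hf.cumCost_insertionSort_le hpos hb

end LargerFirst

lemma largerFirst_max_zero_div_sub {A C : ℝ} (hA : 0 ≤ A) (hC : 0 ≤ C) :
    LargerFirst fun s => max 0 (C / s - A) := by
  intro b a h hb ha hah
  simp only [cumCost_cons, cumCost_nil, add_zero]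
  have hh : 0 < h := ha.trans_le hah
  set t := b + a + h
  have ht : b + h + a = t := add_right_comm _ _ _
  rw [ht]
  have hba : 0 < b + a := by linarith
  have hbh : 0 < b + h := by linarith
  have htpos : 0 < t := by linarith
  have hbh_t : C / t ≤ C / (b + h) := div_le_div_of_nonneg_left hC hbh (by linarith)
  have hba_bh : C / (b + h) ≤ C / (b + a) := div_le_div_of_nonneg_left hC hba (by linarith)
  rcases le_total (C / t - A) 0 with hT | hT
  · -- the last level costs nothing; `u ↦ u * (C / (b + u) - A)` is decreasing when `C ≤ A t`
    rw [max_eq_left hT, mul_zero, mul_zero, add_zero, add_zero]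
    rcases le_total (C / (b + h) - A) 0 with hH | hH
    · rw [max_eq_left hH, mul_zero]; positivity
    rw [max_eq_right hH, max_eq_right (hH.trans (by linarith))]
    have hCt : C ≤ A * t := by rwa [sub_nonpos, div_le_iff₀ htpos] at hT
    rw [mul_sub, mul_sub, mul_div_assoc', mul_div_assoc', div_sub' hbh.ne', div_sub' hba.ne',
      div_le_div_iff₀ hbh hba]
    nlinarith [mul_le_mul_of_nonneg_right hCt hb, mul_nonneg hA (mul_nonneg ha.le hh.le),
      mul_nonneg (sub_nonneg.2 hah) (mul_nonneg hA (mul_nonneg ha.le hh.le))]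
  · rw [max_eq_right hT, max_eq_right (hT.trans (by linarith)),
      max_eq_right (hT.trans (by linarith))]
    have key : h * (C / (b + h)) + a * (C / t) ≤ a * (C / (b + a)) + h * (C / t) := by
      rw [mul_div_assoc', mul_div_assoc', mul_div_assoc', mul_div_assoc',
        div_add_div _ _ hbh.ne' htpos.ne', div_add_div _ _ hba.ne' htpos.ne',
        div_le_div_iff₀ (by positivity) (by positivity)]
      nlinarith [mul_nonneg (mul_nonneg (mul_nonneg hC ha.le) hh.le) (sub_nonneg.2 hah),
        mul_pos hba htpos, mul_pos hbh htpos, mul_nonneg hC hb]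
    nlinarith [key]

section SortedByKey

variable {ι κ : Type*} [DecidableEq ι] [LinearOrder κ] {key : ι → κ}

lemma exists_pairwise_lt_toFinset_eq (hkey : Function.Injective key) (s : Finset ι) :
    ∃ L : List ι, L.Pairwise (fun i j => key i < key j) ∧ L.toFinset = s := by
  let r : ι → ι → Prop := fun i j => key i ≤ key j
  have : Std.Total r := ⟨fun i j => le_total (key i) (key j)⟩
  have : IsTrans ι r := ⟨fun _ _ _ => le_trans⟩
  have hperm := List.perm_insertionSort r s.toList
  refine ⟨s.toList.insertionSort r, ?_,
    by rw [List.toFinset_eq_of_perm _ _ hperm, Finset.toList_toFinset]⟩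
  refine ((List.pairwise_insertionSort r _).and (hperm.nodup_iff.2 s.nodup_toList)).imp ?_
  exact fun ⟨hle, hne⟩ => hle.lt_of_ne (hkey.ne hne)

lemma cumCost_map_eq_sum (f : ℝ → ℝ) (w : ι → ℝ) {L : List ι}
    (hL : L.Pairwise (fun i j => key i < key j)) (b : ℝ) :
    cumCost f b (L.map w) =
      ∑ j ∈ L.toFinset, w j * f (b + ∑ i ∈ L.toFinset with key i ≤ key j, w i) := by
  induction L generalizing b with
  | nil => simp
  | cons a L ih =>
    obtain ⟨ha, hL⟩ := List.pairwise_cons.1 hL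
    have haL : a ∉ L.toFinset := fun h => (ha a (List.mem_toFinset.1 h)).false
    have hfirst : {i ∈ insert a L.toFinset | key i ≤ key a} = {a} := by
      ext i
      simp only [Finset.mem_filter, Finset.mem_insert, Finset.mem_singleton, List.mem_toFinset]
      constructor
      · rintro ⟨rfl | hi, hle⟩
        · rfl
        · exact absurd hle (ha i hi).not_ge
      · rintro rfl
        exact ⟨Or.inl rfl, le_rfl⟩
    have hlater : ∀ j ∈ L.toFinset, {i ∈ insert a L.toFinset | key i ≤ key j} =
        insert a {i ∈ L.toFinset | key i ≤ key j} := fun j hj => by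
      rw [Finset.filter_insert, if_pos (ha j (List.mem_toFinset.1 hj)).le]
    rw [List.map_cons, cumCost_cons, ih hL, List.toFinset_cons, Finset.sum_insert haL, hfirst,
      Finset.sum_singleton]
    congr 1
    refine Finset.sum_congr rfl fun j hj => ?_
    rw [hlater j hj, Finset.sum_insert fun h => haL (Finset.mem_of_mem_filter a h), add_assoc]

end SortedByKey

namespace StarGame

variable {n : ℕ} (G : StarGame n)

noncomputable def rate (s : ℝ) : ℝ := (1 + G.α) * G.Z / s - G.α

lemma rate_eq (s : ℝ) : G.rate s = 1 - (1 + G.α) * (1 - G.Z / s) := by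
  unfold rate; ring

lemma rate_anti {s t : ℝ} (hs : 0 < s) (hst : s ≤ t) : G.rate t ≤ G.rate s :=
  sub_le_sub_right (div_le_div_of_nonneg_left
    (mul_nonneg (by linarith [G.α_pos]) G.Z_nonneg) hs hst) _

lemma ret_eq {T : Finset (Fin n)} (hT : 0 < ∑ j ∈ T, G.x j) (i : Fin n) :
    G.ret T i = G.x i * max 0 (1 - G.rate (∑ j ∈ T, G.x j)) := by
  rw [ret, mul_max_of_nonneg _ _ (G.x_pos i).le, mul_zero, rate]
  congr 1
  field_simp
  ring

lemma ret_nonneg (T : Finset (Fin n)) (i : Fin n) : 0 ≤ G.ret T i := le_max_left _ _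

lemma ret_mono {T T' : Finset (Fin n)} {i : Fin n} (hi : i ∈ T) (hTT' : T ⊆ T') :
    G.ret T i ≤ G.ret T' i := by
  have hpos : 0 < ∑ j ∈ T, G.x j := Finset.sum_pos' (fun j _ => (G.x_pos j).le) ⟨i, hi, G.x_pos i⟩
  have hle : ∑ j ∈ T, G.x j ≤ ∑ j ∈ T', G.x j :=
    Finset.sum_le_sum_of_subset_of_nonneg hTT' fun j _ _ => (G.x_pos j).le
  rw [G.ret_eq hpos, G.ret_eq (hpos.trans_le hle)]
  gcongr
  · exact (G.x_pos i).le
  · exact G.rate_anti hpos hle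

lemma le_coopUtil_iff {c : Fin n → ℝ} {S : Finset (Fin n)} {i : Fin n} :
    G.x i ≤ G.coopUtil c S i ↔ G.x i - c i ≤ G.ret S i := by
  unfold coopUtil
  split_ifs with h₁ h₂ <;> constructor <;> intro <;> linarith

lemma coopUtil_lt_iff {c : Fin n → ℝ} {S : Finset (Fin n)} {i : Fin n} :
    G.coopUtil c S i < G.x i ↔ G.ret S i < G.x i - c i := by
  rw [← not_le, ← not_le, G.le_coopUtil_iff]

/-- Players are processed by non-increasing investment, ties broken by index. -/
def orderKey (i : Fin n) : ℝᵒᵈ ×ₗ Fin n := toLex (OrderDual.toDual (G.x i), i)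

lemma orderKey_injective : Function.Injective G.orderKey :=
  fun _ _ h => congrArg (fun k => (ofLex k).2) h

lemma orderKey_le_iff {i j : Fin n} :
    G.orderKey j ≤ G.orderKey i ↔ G.x i < G.x j ∨ (G.x j = G.x i ∧ j ≤ i) :=
  Prod.Lex.toLex_le_toLex

lemma x_le_of_orderKey_lt {i j : Fin n} (h : G.orderKey i < G.orderKey j) : G.x j ≤ G.x i := by
  rcases G.orderKey_le_iff.1 h.le with h | ⟨h, -⟩
  exacts [h.le, h.ge]

lemma pos_of_mem_map_x {l : List (Fin n)} {y : ℝ} (hy : y ∈ l.map G.x) : 0 < y := by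
  obtain ⟨i, -, rfl⟩ := List.mem_map.1 hy
  exact G.x_pos i

lemma subsetCollateral_of_mem {S : Finset (Fin n)} {i : Fin n} (hi : i ∈ S) :
    G.subsetCollateral S i = G.x i := if_pos hi

lemma subsetCollateral_of_not_mem {S : Finset (Fin n)} {i : Fin n} (hi : i ∉ S) :
    G.subsetCollateral S i = G.x i * max 0 (G.rate ((∑ j ∈ S, G.x j) +
      ∑ j ∈ Sᶜ with G.orderKey j ≤ G.orderKey i, G.x j)) := by
  simp only [subsetCollateral, if_neg hi, G.orderKey_le_iff, ← rate_eq,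
    mul_max_of_nonneg _ _ (G.x_pos i).le, mul_zero]

lemma subsetCollateral_nonneg (S : Finset (Fin n)) (i : Fin n) :
    0 ≤ G.subsetCollateral S i := by
  by_cases hi : i ∈ S
  · rw [G.subsetCollateral_of_mem hi]; exact (G.x_pos i).le
  · rw [G.subsetCollateral_of_not_mem hi]; exact mul_nonneg (G.x_pos i).le (le_max_left _ _)

lemma sub_subsetCollateral_le_ret {S T : Finset (Fin n)} {i : Fin n} (hST : S ⊆ T)
    (hpred : ∀ j ∉ S, G.orderKey j ≤ G.orderKey i → j ∈ T) :
    G.x i - G.subsetCollateral S i ≤ G.ret T i := by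
  by_cases hiS : i ∈ S
  · rw [G.subsetCollateral_of_mem hiS, sub_self]
    exact G.ret_nonneg T i
  set P := {j ∈ Sᶜ | G.orderKey j ≤ G.orderKey i}
  have hiP : i ∈ P := Finset.mem_filter.2 ⟨Finset.mem_compl.2 hiS, le_rfl⟩
  have hsum : (∑ j ∈ S, G.x j) + ∑ j ∈ P, G.x j = ∑ j ∈ S ∪ P, G.x j :=
    (Finset.sum_union (Finset.disjoint_left.2 fun j hjS hjP =>
      Finset.mem_compl.1 (Finset.mem_filter.1 hjP).1 hjS)).symm
  have hpos : 0 < (∑ j ∈ S, G.x j) + ∑ j ∈ P, G.x j :=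
    hsum ▸ Finset.sum_pos' (fun j _ => (G.x_pos j).le)
      ⟨i, Finset.mem_union_right _ hiP, G.x_pos i⟩
  have hle : (∑ j ∈ S, G.x j) + ∑ j ∈ P, G.x j ≤ ∑ j ∈ T, G.x j := by
    refine hsum ▸ Finset.sum_le_sum_of_subset_of_nonneg ?_ fun j _ _ => (G.x_pos j).le
    refine Finset.union_subset hST fun j hj => ?_
    obtain ⟨hjS, hji⟩ := Finset.mem_filter.1 hj
    exact hpred j (Finset.mem_compl.1 hjS) hji
  have hrate := G.rate_anti hpos hle
  have hret := G.ret_eq (hpos.trans_le hle) i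
  rw [G.subsetCollateral_of_not_mem hiS, hret]
  nlinarith [G.x_pos i, le_max_right 0 (G.rate ((∑ j ∈ S, G.x j) + ∑ j ∈ P, G.x j)),
    le_max_right 0 (1 - G.rate (∑ j ∈ T, G.x j))]

lemma nashEq_univ_subsetCollateral (S : Finset (Fin n)) :
    G.NashEq (G.subsetCollateral S) Finset.univ :=
  ⟨fun _ _ => G.le_coopUtil_iff.2 <|
    G.sub_subsetCollateral_le_ret (Finset.subset_univ S) fun j _ _ => Finset.mem_univ j,
   fun i hi => absurd (Finset.mem_univ i) hi⟩

/-- The first defector in the processing order would rather cooperate. -/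
lemma eq_univ_of_nashEq_subsetCollateral {S S' : Finset (Fin n)}
    (hS' : G.NashEq (G.subsetCollateral S) S') : S' = Finset.univ := by
  by_contra hne
  obtain ⟨i, hiD, hfirst⟩ := Finset.exists_min_image S'ᶜ G.orderKey
    (Finset.nonempty_iff_ne_empty.2 (mt (Finset.compl_eq_empty_iff _).1 hne))
  have hdefect : ∀ j ∈ S'ᶜ, G.ret (insert j S') j < G.x j - G.subsetCollateral S j :=
    fun j hj => G.coopUtil_lt_iff.1 (hS'.2 j (Finset.mem_compl.1 hj))
  have hS : S ⊆ insert i S' := fun j hjS => by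
    by_contra hj
    have := hdefect j (Finset.mem_compl.2 fun h => hj (Finset.mem_insert_of_mem h))
    rw [G.subsetCollateral_of_mem hjS, sub_self] at this
    exact this.not_ge (G.ret_nonneg _ _)
  have hpred : ∀ j ∉ S, G.orderKey j ≤ G.orderKey i → j ∈ insert i S' := fun j _ hji => by
    by_cases hj : j ∈ S'
    · exact Finset.mem_insert_of_mem hj
    · rw [G.orderKey_injective (hji.antisymm (hfirst j (Finset.mem_compl.2 hj)))]
      exact Finset.mem_insert_self i S'
  exact (hdefect i hiD).not_ge (G.sub_subsetCollateral_le_ret hS hpred)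

theorem viable_subsetCollateral (S : Finset (Fin n)) : G.Viable (G.subsetCollateral S) :=
  ⟨G.subsetCollateral_nonneg S, G.nashEq_univ_subsetCollateral S,
    fun _ => G.eq_univ_of_nashEq_subsetCollateral⟩

noncomputable def willing (c : Fin n → ℝ) (U : Finset (Fin n)) : Finset (Fin n) :=
  {j | G.x j ≤ G.coopUtil c (insert j U) j}

lemma willing_mono (c : Fin n → ℝ) : Monotone (G.willing c) := fun U V hUV j hj => by
  simp only [willing, Finset.mem_filter, Finset.mem_univ, true_and, G.le_coopUtil_iff] at hj ⊢
  exact hj.trans (G.ret_mono (Finset.mem_insert_self j U) (Finset.insert_subset_insert j hUV))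

lemma nashEq_of_willing_eq {c : Fin n → ℝ} {U : Finset (Fin n)} (hU : G.willing c U = U) :
    G.NashEq c U := by
  have hmem : ∀ j, j ∈ U ↔ G.x j ≤ G.coopUtil c (insert j U) j := fun j => by
    nth_rewrite 1 [← hU]; simp [willing]
  refine ⟨fun j hj => ?_, fun j hj => lt_of_not_ge fun h => hj ((hmem j).2 h)⟩
  simpa [Finset.insert_eq_of_mem hj] using (hmem j).1 hj

/-- If no player outside `T` were willing, a smallest `U ⊆ T` with `willing c U ⊆ U` would be a
fixed point of the monotone map `willing c`, i.e. a second equilibrium. -/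
lemma exists_mem_willing_of_ne_univ {c : Fin n → ℝ} (hc : G.Viable c) {T : Finset (Fin n)}
    (hT : T ≠ Finset.univ) : ∃ j, j ∉ T ∧ j ∈ G.willing c T := by
  by_contra! hstall
  let closed : Finset (Finset (Fin n)) := {U | G.willing c U ⊆ U ∧ U ⊆ T}
  obtain ⟨P, hP, hmin⟩ := closed.exists_min_image Finset.card
    ⟨T, Finset.mem_filter.2
      ⟨Finset.mem_univ _, fun j hj => by_contra fun hjT => hstall j hjT hj, subset_rfl⟩⟩
  simp only [closed, Finset.mem_filter, Finset.mem_univ, true_and] at hP hmin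
  have hfix : G.willing c P = P := Finset.eq_of_subset_of_card_le hP.1 <|
    hmin _ ⟨G.willing_mono c hP.1, hP.1.trans hP.2⟩
  have hPuniv := hc.2.2 P (G.nashEq_of_willing_eq hfix)
  exact hT (Finset.eq_univ_of_forall fun j => hP.2 (hPuniv ▸ Finset.mem_univ j))

noncomputable def clampedRate (s : ℝ) : ℝ := min 1 (max 0 (G.rate s))

lemma mul_clampedRate_le {c : Fin n → ℝ} (hc : ∀ i, 0 ≤ c i) {T : Finset (Fin n)} {j : Fin n}
    (hjT : j ∉ T) (hj : j ∈ G.willing c T) :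
    G.x j * G.clampedRate ((∑ i ∈ T, G.x i) + G.x j) ≤ c j := by
  have hsum : ∑ i ∈ insert j T, G.x i = (∑ i ∈ T, G.x i) + G.x j := by
    rw [Finset.sum_insert hjT, add_comm]
  have hpos : 0 < ∑ i ∈ insert j T, G.x i :=
    Finset.sum_pos' (fun i _ => (G.x_pos i).le) ⟨j, Finset.mem_insert_self j T, G.x_pos j⟩
  have hret : G.x j - c j ≤ G.x j * max 0 (1 - G.rate ((∑ i ∈ T, G.x i) + G.x j)) := by
    simpa only [willing, Finset.mem_filter, Finset.mem_univ, true_and, G.le_coopUtil_iff,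
      G.ret_eq hpos, hsum] using hj
  have hx := G.x_pos j
  unfold clampedRate
  rcases le_total (G.rate ((∑ i ∈ T, G.x i) + G.x j)) 1 with h₁ | h₁
  · rw [max_eq_right (by linarith)] at hret
    rw [min_eq_right (max_le zero_le_one h₁), mul_max_of_nonneg _ _ hx.le, mul_zero]
    exact max_le (hc j) (by nlinarith)
  · rw [max_eq_left (by linarith), mul_zero] at hret
    rw [min_eq_left (le_max_of_le_right h₁), mul_one]
    linarith

lemma exists_list_cumCost_le {c : Fin n → ℝ} (hc : G.Viable c) (T : Finset (Fin n)) :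
    ∃ L : List (Fin n), L.Nodup ∧ L.toFinset = Tᶜ ∧
      cumCost G.clampedRate (∑ i ∈ T, G.x i) (L.map G.x) ≤ ∑ i ∈ Tᶜ, c i := by
  obtain ⟨k, hk⟩ : ∃ k, Tᶜ.card = k := ⟨_, rfl⟩
  induction k generalizing T with
  | zero =>
    rw [Finset.card_eq_zero.1 hk]
    exact ⟨[], List.nodup_nil, rfl, le_rfl⟩
  | succ k ih =>
    have hT : T ≠ Finset.univ := fun h => by simp [h] at hk
    obtain ⟨j, hjT, hj⟩ := G.exists_mem_willing_of_ne_univ hc hT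
    have hjc : j ∈ Tᶜ := Finset.mem_compl.2 hjT
    obtain ⟨L, hL, hLT, hcost⟩ := ih (insert j T)
      (by rw [Finset.compl_insert, Finset.card_erase_of_mem hjc, hk, Nat.add_sub_cancel])
    refine ⟨j :: L, List.nodup_cons.2 ⟨fun h => ?_, hL⟩, ?_, ?_⟩
    · have hjL : j ∈ (insert j T)ᶜ := hLT ▸ List.mem_toFinset.2 h
      simp at hjL
    · rw [List.toFinset_cons, hLT, Finset.compl_insert, Finset.insert_erase hjc]
    · rw [Finset.sum_insert hjT, add_comm] at hcost
      rw [List.map_cons, cumCost_cons, ← Finset.add_sum_erase _ _ hjc, ← Finset.compl_insert]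
      exact add_le_add (G.mul_clampedRate_le hc.1 hjT hj) hcost

lemma total_subsetCollateral {S : Finset (Fin n)} {L : List (Fin n)}
    (hL : L.Pairwise fun i j => G.orderKey i < G.orderKey j) (hLS : L.toFinset = Sᶜ) :
    total (G.subsetCollateral S) =
      (∑ j ∈ S, G.x j) + cumCost (fun s => max 0 (G.rate s)) (∑ j ∈ S, G.x j) (L.map G.x) := by
  rw [cumCost_map_eq_sum _ _ hL, hLS, total, ← Finset.sum_add_sum_compl S]
  congr 1
  · exact Finset.sum_congr rfl fun i hi => G.subsetCollateral_of_mem hi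
  · exact Finset.sum_congr rfl fun i hi => G.subsetCollateral_of_not_mem (Finset.mem_compl.1 hi)

lemma largerFirst_max_zero_rate : LargerFirst fun s => max 0 (G.rate s) :=
  largerFirst_max_zero_div_sub G.α_pos.le (mul_nonneg (by linarith [G.α_pos]) G.Z_nonneg)

/-- Players whose clamped rate is `1` go to `S`; at the first player whose rate drops below `1`
the clamp becomes inactive for good, and the remaining cost is minimized by the order of `c(S)`. -/
lemma exists_total_subsetCollateral_le {L : List (Fin n)} (hL : L.Nodup) {S₀ : Finset (Fin n)}
    (hLS₀ : L.toFinset = S₀ᶜ) : ∃ S, total (G.subsetCollateral S) ≤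
      (∑ j ∈ S₀, G.x j) + cumCost G.clampedRate (∑ j ∈ S₀, G.x j) (L.map G.x) := by
  induction L generalizing S₀ with
  | nil =>
    refine ⟨S₀, le_of_eq ?_⟩
    rw [G.total_subsetCollateral List.Pairwise.nil hLS₀]
    rfl
  | cons j L ih =>
    obtain ⟨hjL, hL⟩ := List.nodup_cons.1 hL
    have hjS₀ : j ∉ S₀ := Finset.mem_compl.1 (hLS₀ ▸ List.mem_toFinset.2 List.mem_cons_self)
    set b := ∑ i ∈ S₀, G.x i
    have hb : 0 ≤ b := Finset.sum_nonneg fun i _ => (G.x_pos i).le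
    rw [List.map_cons, cumCost_cons]
    rcases le_total 1 (G.rate (b + G.x j)) with hfull | hpartial
    · have hLS : L.toFinset = (insert j S₀)ᶜ := by
        rw [Finset.compl_insert, ← hLS₀, List.toFinset_cons,
          Finset.erase_insert fun h => hjL (List.mem_toFinset.1 h)]
      obtain ⟨S, hS⟩ := ih hL hLS
      rw [Finset.sum_insert hjS₀, add_comm (G.x j)] at hS
      rw [clampedRate, min_eq_left (le_max_of_le_right hfull), mul_one, ← add_assoc]
      exact ⟨S, hS⟩
    · have hclamp : ∀ s, b + G.x j ≤ s → G.clampedRate s = max 0 (G.rate s) := fun s hs =>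
        min_eq_right (max_le zero_le_one
          ((G.rate_anti (by linarith [G.x_pos j]) hs).trans hpartial))
      obtain ⟨L₀, hL₀, hL₀S₀⟩ := exists_pairwise_lt_toFinset_eq G.orderKey_injective S₀ᶜ
      have hperm : (L₀.map G.x).Perm ((j :: L).map G.x) :=
        (List.perm_of_nodup_nodup_toFinset_eq hL₀.nodup (List.nodup_cons.2 ⟨hjL, hL⟩)
          (hL₀S₀.trans hLS₀.symm)).map G.x
      have hsorted : (L₀.map G.x).Pairwise (· ≥ ·) :=
        List.pairwise_map.2 (hL₀.imp G.x_le_of_orderKey_lt)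
      refine ⟨S₀, ?_⟩
      rw [G.total_subsetCollateral hL₀ hL₀S₀, hclamp _ le_rfl,
        cumCost_congr (fun a ha => ?_) fun s hs => hclamp s hs]
      · exact (add_le_add_iff_left b).2 <| G.largerFirst_max_zero_rate.cumCost_le_of_perm hperm
          hsorted (fun _ => G.pos_of_mem_map_x) hb
      · exact (G.pos_of_mem_map_x ha).le

end StarGame

/-- **Correctness of the subset-selection procedure (Corollary 2).**  Every
collateral vector `c(S)` produced by the procedure is viable, and the minimum
over all subsets `S` of the total collateral of `c(S)` equals the optimal
value of the single-enterprise collateral minimization problem. -/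
theorem subset_selection_correct {n : ℕ} (G : StarGame n) :
    (∀ S : Finset (Fin n), G.Viable (G.subsetCollateral S)) ∧
      ∀ c : Fin n → ℝ, G.Viable c →
        ∃ S : Finset (Fin n),
          StarGame.total (G.subsetCollateral S) ≤ StarGame.total c := by
  refine ⟨G.viable_subsetCollateral, fun c hc => ?_⟩
  obtain ⟨L, hL, hLT, hcost⟩ := G.exists_list_cumCost_le hc ∅
  obtain ⟨S, hS⟩ := G.exists_total_subsetCollateral_le hL hLT
  refine ⟨S, hS.trans ?_⟩
  simpa [StarGame.total] using hcost
end
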